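/- Let W be a ℂ-vector space with a family (d_m)_{m∈ℤ} of ℂ-linear endomorphisms satisfying the Witt relations. Then for all m, n ∈ ℤ: (i) d_m ∘ (d_0 − n·id) = (d_0 − (n+m)·id) ∘ d_m, so d_m maps the subspace W_n := range(d_0 − n·id) into W_{n+m}; and (ii) denoting by d̄_m^{(n)} : W/W_n → W/W_{n+m} the induced maps, one has d̄_m^{(n+k)} ∘ d̄_k^{(n)} − d̄_k^{(n+m)} ∘ d̄_m^{(n)} = (k − m)·d̄_{m+k}^{(n)} for all m, k, n ∈ ℤ. Hence the direct sum 𝔚(W) = ⊕_{n∈ℤ} W/W_n is a weight module over the centerless Virasoro algebra. -/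
import Mathlib


/-- The subspace `W_n = range(d_0 − n·id)` appearing in Nilsson's weighting functor. -/
noncomputable def Wsub {W : Type*} [AddCommGroup W] [Module ℂ W]
    (d : ℤ → Module.End ℂ W) (n : ℤ) : Submodule ℂ W :=
  LinearMap.range (d 0 - (n : ℂ) • (1 : Module.End ℂ W))

/-- for a module `W` over the centerless Virasoro algebra (a family `(d m)`
satisfying the Witt relations): (i) `d_m ∘ (d_0 − n·id) = (d_0 − (n+m)·id) ∘ d_m`, so `d_m`
maps `W_n = range(d_0 − n·id)` into `W_{n+m}`; and (ii) the induced maps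
`d̄_m^{(n)} : W/W_n → W/W_{n+m}` satisfy
`d̄_m^{(n+k)} ∘ d̄_k^{(n)} − d̄_k^{(n+m)} ∘ d̄_m^{(n)} = (k − m)·d̄_{m+k}^{(n)}`.
Hence `𝔚(W) = ⊕_{n∈ℤ} W/W_n` is a weight module over the centerless Virasoro algebra. -/
theorem weighting_functor {W : Type*} [AddCommGroup W] [Module ℂ W]
    (d : ℤ → Module.End ℂ W)
    (hwitt : ∀ m n : ℤ, d m * d n - d n * d m = ((n - m : ℤ) : ℂ) • d (m + n)) :
    (∀ m n : ℤ, d m * (d 0 - (n : ℂ) • (1 : Module.End ℂ W))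
        = (d 0 - ((n + m : ℤ) : ℂ) • (1 : Module.End ℂ W)) * d m) ∧
    (∀ m n : ℤ, ∀ w ∈ Wsub d n, d m w ∈ Wsub d (n + m)) ∧
    (∀ h : (∀ m n p : ℤ, n + m = p → Wsub d n ≤ (Wsub d p).comap (d m)),
      ∀ m k n : ℤ,
        (Submodule.mapQ (Wsub d (n + k)) (Wsub d (n + m + k)) (d m)
            (h m (n + k) (n + m + k) (by ring))) ∘ₗ
          (Submodule.mapQ (Wsub d n) (Wsub d (n + k)) (d k) (h k n (n + k) rfl))
        - (Submodule.mapQ (Wsub d (n + m)) (Wsub d (n + m + k)) (d k)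
            (h k (n + m) (n + m + k) rfl)) ∘ₗ
          (Submodule.mapQ (Wsub d n) (Wsub d (n + m)) (d m) (h m n (n + m) rfl))
        = ((k - m : ℤ) : ℂ) • Submodule.mapQ (Wsub d n) (Wsub d (n + m + k)) (d (m + k))
            (h (m + k) n (n + m + k) (by ring))) := by

  have key : ∀ m n : ℤ, d m * (d 0 - (n : ℂ) • (1 : Module.End ℂ W))
      = (d 0 - ((n + m : ℤ) : ℂ) • (1 : Module.End ℂ W)) * d m := by
    intro m n
    have h := hwitt m 0
    simp only [add_zero, zero_sub, Int.cast_neg] at h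
    have hm : d m * d 0 = d 0 * d m - (m : ℂ) • d m := by
      have := sub_eq_iff_eq_add.mp h
      rw [this]; module
    simp only [mul_sub, sub_mul, mul_smul_comm, smul_mul_assoc, mul_one, one_mul, hm]
    push_cast
    module
  refine ⟨key, ?_, ?_⟩
  · intro m n w hw
    obtain ⟨v, hv⟩ := hw
    refine ⟨d m v, ?_⟩
    have := congrArg (fun f : Module.End ℂ W => f v) (key m n)
    simp only [Module.End.mul_apply] at this
    rw [← hv, ← this]
  · intro h m k n
    apply Submodule.linearMap_qext
    ext w
    simp only [LinearMap.comp_apply, LinearMap.sub_apply, LinearMap.smul_apply,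
      Submodule.mkQ_apply, Submodule.mapQ_apply]
    rw [← Submodule.Quotient.mk_sub, ← Submodule.Quotient.mk_smul]
    congr 1
    have := congrArg (fun f : Module.End ℂ W => f w) (hwitt m k)
    simpa using this
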